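/- arXiv:1901.03245 — 9 statements merged into one kernel-verified Lean document; each statement's English description precedes it below -/
import Mathlib

section
/- For any real n-vectors y and z, ½‖(y+z)₊‖² − ½‖y₊‖² − zᵀy₊ = ½ Σ_{j=1}^{n} d_j z_j², where for each j, d_j = ∫₀¹ ( ∫₀¹ σ(y_j + s t z_j) ds ) 2t dt and σ(ξ) = 1 if ξ > 0, σ(ξ) = 0 if ξ ≤ 0. -/
/-!
Everything is coordinatewise, and rests on `σ` and `u ↦ u₊` being the derivatives of `u ↦ u₊`
and `u ↦ u₊² / 2`. After the substitution `u = a + s t b`, the inner integral times `t b` is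
`(a + t b)₊ - a₊`, so the double integral times `b²` is `2 b ∫₀¹ ((a + t b)₊ - a₊) dt`, and a
second substitution turns this into `(a + b)₊² - a₊² - 2 b a₊`.
-/

open Matrix

/-- `σ(ξ) = 1` if `ξ > 0` and `0` if `ξ ≤ 0`. -/
noncomputable def posSign (ξ : ℝ) : ℝ := if 0 < ξ then 1 else 0

lemma monotone_posSign : Monotone posSign := by
  intro u v huv
  unfold posSign
  split_ifs with hu hv <;> norm_num
  exact hv (hu.trans_le huv)

lemma mul_integral_zero_one_comp_add_mul (f : ℝ → ℝ) (a c : ℝ) :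
    c * ∫ s in (0:ℝ)..1, f (a + s * c) = ∫ u in a..a + c, f u := by
  simp [mul_comm]

lemma integral_posSign (a b : ℝ) : ∫ u in a..b, posSign u = max 0 b - max 0 a := by
  -- on `Ι 0 x` the integrand is constant: `1` if `0 ≤ x`, `0` otherwise
  have from_zero (x : ℝ) : ∫ u in (0:ℝ)..x, posSign u = max 0 x := by
    rcases le_total 0 x with hx | hx
    · rw [max_eq_right hx, intervalIntegral.integral_congr_ae (g := fun _ => (1:ℝ))]
      · simp
      refine MeasureTheory.ae_of_all _ fun u hu => ?_
      rw [Set.uIoc_of_le hx] at hu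
      simp [posSign, hu.1]
    · rw [max_eq_left hx, intervalIntegral.integral_congr_ae (g := fun _ => (0:ℝ))]
      · simp
      refine MeasureTheory.ae_of_all _ fun u hu => ?_
      rw [Set.uIoc_of_ge hx] at hu
      simp [posSign, hu.2]
  rw [← intervalIntegral.integral_interval_sub_left monotone_posSign.intervalIntegrable
    monotone_posSign.intervalIntegrable, from_zero, from_zero]

lemma integral_max_zero (a b : ℝ) :
    ∫ u in a..b, max 0 u = (max 0 b ^ 2 - max 0 a ^ 2) / 2 := by
  have from_zero (x : ℝ) : ∫ u in (0:ℝ)..x, max 0 u = max 0 x ^ 2 / 2 := by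
    rcases le_total 0 x with hx | hx
    · rw [max_eq_right hx, intervalIntegral.integral_congr_ae (g := id)]
      · simp
      refine MeasureTheory.ae_of_all _ fun u hu => ?_
      rw [Set.uIoc_of_le hx] at hu
      simp [hu.1.le]
    · rw [max_eq_left hx, intervalIntegral.integral_congr_ae (g := fun _ => (0:ℝ))]
      · simp
      refine MeasureTheory.ae_of_all _ fun u hu => ?_
      rw [Set.uIoc_of_ge hx] at hu
      simp [hu.2]
  have integrable (x : ℝ) : IntervalIntegrable (max 0 ·) MeasureTheory.volume 0 x :=
    (continuous_const.max continuous_id).intervalIntegrable _ _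
  rw [← intervalIntegral.integral_interval_sub_left (integrable b) (integrable a),
    from_zero, from_zero]
  ring

lemma integral_integral_posSign_mul_sq (a b : ℝ) :
    (∫ t in (0:ℝ)..1, (∫ s in (0:ℝ)..1, posSign (a + s * t * b)) * (2 * t)) * b ^ 2
      = max 0 (a + b) ^ 2 - max 0 a ^ 2 - 2 * b * max 0 a := by
  have inner_eq (t : ℝ) : (t * b) * ∫ s in (0:ℝ)..1, posSign (a + s * t * b)
      = max 0 (a + t * b) - max 0 a := by
    simp only [mul_assoc _ t b]
    rw [mul_integral_zero_one_comp_add_mul, integral_posSign]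
  calc (∫ t in (0:ℝ)..1, (∫ s in (0:ℝ)..1, posSign (a + s * t * b)) * (2 * t)) * b ^ 2
      = ∫ t in (0:ℝ)..1, 2 * b * (max 0 (a + t * b) - max 0 a) := by
        rw [← intervalIntegral.integral_mul_const]
        congr 1 with t
        rw [← inner_eq]
        ring
    _ = 2 * (b * ∫ t in (0:ℝ)..1, max 0 (a + t * b)) - 2 * b * max 0 a := by
        rw [intervalIntegral.integral_const_mul, intervalIntegral.integral_sub]
        · simp only [intervalIntegral.integral_const, sub_zero, smul_eq_mul, one_mul]
          ring
        all_goals exact Continuous.intervalIntegrable (by fun_prop) _ _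
    _ = max 0 (a + b) ^ 2 - max 0 a ^ 2 - 2 * b * max 0 a := by
        rw [mul_integral_zero_one_comp_add_mul, integral_max_zero]
        ring

/-- Lemma 2: vector Taylor expansion of `y ↦ ½‖y₊‖²` with diagonal integral remainder. -/
theorem taylor_pos_part_sq_vec {n : ℕ} (y z : Fin n → ℝ) (d : Fin n → ℝ)
    (hd : ∀ j, d j = ∫ t in (0:ℝ)..1,
        (∫ s in (0:ℝ)..1, posSign (y j + s * t * z j)) * (2 * t)) :
    (1/2) * (∑ j, (max 0 (y j + z j))^2) - (1/2) * (∑ j, (max 0 (y j))^2)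
      - z ⬝ᵥ (fun j => max 0 (y j))
      = (1/2) * ∑ j, d j * (z j)^2 := by
  simp only [hd, integral_integral_posSign_mul_sq, dotProduct, Finset.mul_sum,
    ← Finset.sum_sub_distrib]
  exact Finset.sum_congr rfl fun j _ => by ring
end

section
/- The function φ : ℝᵐ → ℝ defined by φ(p) = ½‖(x̂ + Aᵀp)₊‖² − bᵀp is differentiable at every p ∈ ℝᵐ, with gradient g(p) = A(x̂ + Aᵀp)₊ − b. -/
/-!
`φ` is the separable function `y ↦ ∑ⱼ (yⱼ)₊² / 2` composed with the affine map `p ↦ x̂ + Aᵀp`,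
minus the linear functional `⟪b, ·⟫`. Since `t ↦ t₊² / 2` is differentiable with derivative
`t₊` (also at the kink `t = 0`, where it is `O(t²)`), the separable part has gradient `y₊`, and
the chain rule turns this into `(Aᵀ)* (x̂ + Aᵀp)₊ = A (x̂ + Aᵀp)₊`.
-/

open Matrix InnerProductSpace

theorem hasDerivAt_sq_max_zero_div_two (t : ℝ) :
    HasDerivAt (fun s : ℝ => max 0 s ^ 2 / 2) (max 0 t) t := by
  rcases lt_trichotomy t 0 with ht | rfl | ht
  · rw [max_eq_left ht.le]
    refine (hasDerivAt_const t (0 : ℝ)).congr_of_eventuallyEq ?_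
    filter_upwards [eventually_lt_nhds ht] with s hs
    simp [max_eq_left hs.le]
  · rw [hasDerivAt_iff_isLittleO, Asymptotics.isLittleO_iff]
    intro c hc
    filter_upwards [Metric.ball_mem_nhds (0 : ℝ) hc] with s hs
    rw [mem_ball_zero_iff] at hs
    have hsq : max 0 s ^ 2 ≤ s ^ 2 := by
      rcases le_total s 0 with h | h <;> simp [h, sq_nonneg]
    calc ‖max 0 s ^ 2 / 2 - max 0 0 ^ 2 / 2 - (s - 0) • max 0 0‖ = max 0 s ^ 2 / 2 := by
          simp [abs_of_nonneg]
      _ ≤ ‖s‖ * ‖s‖ := by rw [← sq, Real.norm_eq_abs, sq_abs]; linarith [sq_nonneg s]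
      _ ≤ c * ‖s - 0‖ := by rw [sub_zero]; gcongr
  · rw [max_eq_right ht.le]
    have := (hasDerivAt_pow 2 t).div_const 2
    refine (this.congr_deriv (by ring)).congr_of_eventuallyEq ?_
    filter_upwards [eventually_gt_nhds ht] with s hs
    simp [max_eq_right hs.le]

section Gradient

variable {E F : Type*} [NormedAddCommGroup E] [InnerProductSpace ℝ E]
  [NormedAddCommGroup F] [InnerProductSpace ℝ F]

theorem HasGradientAt.sub [CompleteSpace E] {f g : E → ℝ} {f' g' x : E}
    (hf : HasGradientAt f f' x) (hg : HasGradientAt g g' x) :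
    HasGradientAt (fun y => f y - g y) (f' - g') x := by
  rw [hasGradientAt_iff_hasFDerivAt] at *
  rw [map_sub]
  exact hf.fun_sub hg

theorem hasGradientAt_inner_const_left [CompleteSpace E] (b x : E) :
    HasGradientAt (fun y => ⟪b, y⟫_ℝ) b x :=
  hasGradientAt_iff_hasFDerivAt.2 (innerSL ℝ b).hasFDerivAt

theorem HasGradientAt.comp_const_add_linearMap [FiniteDimensional ℝ E] [FiniteDimensional ℝ F]
    {f : F → ℝ} {g c : F} {x : E} (T : E →ₗ[ℝ] F) (hf : HasGradientAt f g (c + T x)) :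
    HasGradientAt (fun y => f (c + T y)) (T.adjoint g) x := by
  have hdual :
      toDual ℝ E (T.adjoint g) = (toDual ℝ F g).comp (LinearMap.toContinuousLinearMap T) := by
    ext v
    simp [LinearMap.adjoint_inner_left]
  rw [hasGradientAt_iff_hasFDerivAt, hdual]
  exact (hasGradientAt_iff_hasFDerivAt.1 hf).comp x
    ((LinearMap.toContinuousLinearMap T).hasFDerivAt.const_add c)

end Gradient

theorem hasGradientAt_sum_apply {ι : Type*} [Fintype ι] {f : ι → ℝ → ℝ} {f' : ι → ℝ}
    {x : EuclideanSpace ℝ ι} (hf : ∀ i, HasDerivAt (f i) (f' i) (x i)) :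
    HasGradientAt (fun y : EuclideanSpace ℝ ι => ∑ i, f i (y i)) (WithLp.toLp 2 f') x := by
  rw [hasGradientAt_iff_hasFDerivAt]
  have hdual : toDual ℝ (EuclideanSpace ℝ ι) (WithLp.toLp 2 f') =
      ∑ i, f' i • EuclideanSpace.proj (𝕜 := ℝ) i := by
    ext v
    simp [PiLp.inner_apply, mul_comm]
  rw [hdual]
  exact HasFDerivAt.fun_sum fun i _ =>
    (hf i).comp_hasFDerivAt x (PiLp.hasFDerivAt_apply 2 x i)

/-- The function `φ(p) = ½‖(x̂ + Aᵀp)₊‖² − bᵀp` is differentiable at every `p`,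
with gradient `g(p) = A(x̂ + Aᵀp)₊ − b`. -/
theorem phi_hasGradient {m n : ℕ} (A : Matrix (Fin m) (Fin n) ℝ)
    (b : Fin m → ℝ) (xhat : Fin n → ℝ)
    (φ : EuclideanSpace ℝ (Fin m) → ℝ)
    (hφ : ∀ p, φ p = (1/2) * ∑ j,
        (max 0 ((xhat + Aᵀ *ᵥ (WithLp.equiv 2 (Fin m → ℝ) p)) j))^2
        - b ⬝ᵥ (WithLp.equiv 2 (Fin m → ℝ) p)) :
    ∀ p : EuclideanSpace ℝ (Fin m),
      HasGradientAt φ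
        ((WithLp.equiv 2 (Fin m → ℝ)).symm
          (A *ᵥ (fun j => max 0 ((xhat + Aᵀ *ᵥ (WithLp.equiv 2 (Fin m → ℝ) p)) j)) - b))
        p := by
  intro p
  set T := toEuclideanLin Aᵀ
  have hφ' : φ = fun q => (∑ j, max 0 ((WithLp.toLp 2 xhat + T q) j) ^ 2 / 2)
      - ⟪WithLp.toLp 2 b, q⟫_ℝ := by
    ext q
    simp [hφ, T, Finset.mul_sum, div_eq_inv_mul, dotProduct_comm,
      EuclideanSpace.inner_eq_star_dotProduct]
  have hT : T.adjoint = toEuclideanLin A := by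
    rw [← toEuclideanLin_conjTranspose_eq_adjoint, conjTranspose_eq_transpose_of_trivial,
      transpose_transpose]
  have hsq : HasGradientAt (fun y : EuclideanSpace ℝ (Fin n) => ∑ j, max 0 (y j) ^ 2 / 2)
      (WithLp.toLp 2 fun j => max 0 ((WithLp.toLp 2 xhat + T p) j)) (WithLp.toLp 2 xhat + T p) :=
    hasGradientAt_sum_apply fun j => hasDerivAt_sq_max_zero_div_two _
  rw [hφ']
  convert (hsq.comp_const_add_linearMap T).sub (hasGradientAt_inner_const_left _ p) using 1
  ext i
  rw [hT]
  simp [T]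
end

section
/- Let p, q ∈ ℝᵐ and suppose that for every ϑ ∈ [0,1] and every j = 1,…,n, sign((x̂ + Aᵀp + ϑAᵀq)_j)₊ = sign((x̂ + Aᵀp)_j)₊, where sign(ξ)₊ = 1 if ξ > 0 and 0 if ξ ≤ 0. Then φ(p+q) − φ(p) − qᵀg(p) = ½ qᵀ H(p) q. -/
open Matrix

/-- If the sign pattern of `x̂ + Aᵀp + ϑAᵀq` is the same as that of `x̂ + Aᵀp`
for all `ϑ ∈ [0,1]`, then `φ` is exactly quadratic with the generalized Hessian
`H(p) = A Diag(sign(x̂+Aᵀp)₊) Aᵀ`. -/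
theorem phi_locally_quadratic {m n : ℕ} (A : Matrix (Fin m) (Fin n) ℝ)
    (b : Fin m → ℝ) (xhat : Fin n → ℝ)
    (φ : (Fin m → ℝ) → ℝ)
    (hφ : ∀ p, φ p = (1/2) * ∑ j, (max 0 ((xhat + Aᵀ *ᵥ p) j))^2 - b ⬝ᵥ p)
    (g : (Fin m → ℝ) → (Fin m → ℝ))
    (hg : ∀ p, g p = A *ᵥ (fun j => max 0 ((xhat + Aᵀ *ᵥ p) j)) - b)
    (p q : Fin m → ℝ)
    (hsign : ∀ ϑ ∈ Set.Icc (0:ℝ) 1, ∀ j,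
        posSign ((xhat + Aᵀ *ᵥ p + ϑ • (Aᵀ *ᵥ q)) j) = posSign ((xhat + Aᵀ *ᵥ p) j)) :
    φ (p + q) - φ p - q ⬝ᵥ g p
      = (1/2) * (q ⬝ᵥ (A * Matrix.diagonal (fun j => posSign ((xhat + Aᵀ *ᵥ p) j)) * Aᵀ) *ᵥ q) := by
  set u : Fin n → ℝ := fun j => (xhat + Aᵀ *ᵥ p) j with hu
  set v : Fin n → ℝ := fun j => (Aᵀ *ᵥ q) j with hv
  have key : ∀ j, (1/2) * (max 0 (u j + v j))^2 - (1/2) * (max 0 (u j))^2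
      - v j * max 0 (u j) = (1/2) * (posSign (u j) * (v j)^2) := by
    intro j
    have h1 := hsign 1 (by norm_num) j
    simp only [Pi.add_apply, Pi.smul_apply, smul_eq_mul, one_mul] at h1
    have h1' : posSign (u j + v j) = posSign (u j) := by
      simpa [hu, hv, Pi.add_apply] using h1
    by_cases hp : 0 < u j
    · have hpv : 0 < u j + v j := by
        by_contra h
        simp [posSign, hp, h] at h1'
      rw [max_eq_right hpv.le, max_eq_right hp.le]
      simp [posSign, hp]; ring
    · push_neg at hp
      have hpv : u j + v j ≤ 0 := by
        by_contra h
        push_neg at h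
        simp [posSign, h, not_lt.mpr hp] at h1'
      rw [max_eq_left hpv, max_eq_left hp]
      simp [posSign, not_lt.mpr hp]
  have hL : ∑ j, (max 0 ((xhat + Aᵀ *ᵥ (p + q)) j))^2 = ∑ j, (max 0 (u j + v j))^2 :=
    Finset.sum_congr rfl fun j _ => by
      simp [hu, hv, mulVec_add, add_assoc]
  have hqg : q ⬝ᵥ g p = (∑ j, v j * max 0 (u j)) - q ⬝ᵥ b := by
    rw [hg, dotProduct_sub, dotProduct_mulVec, ← mulVec_transpose]
    rfl
  have hrhs : q ⬝ᵥ (A * Matrix.diagonal (fun j => posSign (u j)) * Aᵀ) *ᵥ q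
      = ∑ j, posSign (u j) * (v j)^2 := by
    rw [← mulVec_mulVec, ← mulVec_mulVec, dotProduct_mulVec, ← mulVec_transpose]
    simp only [dotProduct, mulVec_diagonal]
    refine Finset.sum_congr rfl fun j _ => ?_
    simp [hv, sq]; ring
  have hsum : ∑ j, ((1/2) * (max 0 (u j + v j))^2 - (1/2) * (max 0 (u j))^2
      - v j * max 0 (u j)) = ∑ j, (1/2) * (posSign (u j) * (v j)^2) :=
    Finset.sum_congr rfl fun j _ => key j
  rw [Finset.sum_sub_distrib, Finset.sum_sub_distrib, ← Finset.mul_sum, ← Finset.mul_sum,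
    ← Finset.mul_sum] at hsum
  rw [hφ, hφ, hqg, hL, hrhs, dotProduct_add]
  have hfold : ∑ j, (max 0 ((xhat + Aᵀ *ᵥ p) j))^2 = ∑ j, (max 0 (u j))^2 := rfl
  rw [hfold]
  linarith [hsum, dotProduct_comm q b]
end

section
/- Let A be a real m×n matrix with all rows a_1,…,a_m nonzero, b ∈ ℝᵐ, x̂ ∈ ℝⁿ, and δ > 0. Define M(p) = H(p) + δ·Diag(AAᵀ) and γ = ‖Â‖²/δ, where = D⁻¹A with D the diagonal matrix D_{ii} = ‖a_i‖. Then for all p, q ∈ ℝᵐ, φ(p+q) − φ(p) − qᵀg(p) ≤ (γ/2) qᵀ M(p) q. -/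
open Matrix
open scoped Matrix.Norms.L2Operator

/-- The spectral (ℓ2 operator) norm of a real matrix. -/
noncomputable def specNorm {m n : ℕ} (A : Matrix (Fin m) (Fin n) ℝ) : ℝ :=
  ‖LinearMap.toContinuousLinearMap (Matrix.toEuclideanLin A)‖

lemma specNorm_eq {m n : ℕ} (B : Matrix (Fin m) (Fin n) ℝ) : specNorm B = ‖B‖ := rfl

lemma specNorm_transpose {m n : ℕ} (B : Matrix (Fin m) (Fin n) ℝ) :
    specNorm Bᵀ = specNorm B := by
  have h : Bᵀ = Bᴴ := by ext i j; simp [Matrix.conjTranspose_apply]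
  rw [specNorm_eq, specNorm_eq, h, Matrix.l2_opNorm_conjTranspose]

lemma sq_sum_mulVec_le {m n : ℕ} (B : Matrix (Fin m) (Fin n) ℝ) (x : Fin n → ℝ) :
    ∑ i, ((B *ᵥ x) i)^2 ≤ specNorm B ^ 2 * ∑ j, (x j)^2 := by
  have h := B.l2_opNorm_mulVec ((WithLp.equiv 2 (Fin n → ℝ)).symm x)
  rw [EuclideanSpace.norm_eq, EuclideanSpace.norm_eq] at h
  have h1 : Real.sqrt (∑ i, ((B *ᵥ x) i)^2) ≤ specNorm B * Real.sqrt (∑ j, (x j)^2) := by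
    simpa [specNorm_eq, Real.norm_eq_abs, sq_abs] using h
  have hnn : (0:ℝ) ≤ ∑ i, ((B *ᵥ x) i)^2 := Finset.sum_nonneg fun _ _ => sq_nonneg _
  have hnn2 : (0:ℝ) ≤ ∑ j, (x j)^2 := Finset.sum_nonneg fun _ _ => sq_nonneg _
  calc ∑ i, ((B *ᵥ x) i)^2 = Real.sqrt (∑ i, ((B *ᵥ x) i)^2) ^ 2 := (Real.sq_sqrt hnn).symm
    _ ≤ (specNorm B * Real.sqrt (∑ j, (x j)^2)) ^ 2 :=
        pow_le_pow_left₀ (Real.sqrt_nonneg _) h1 2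
    _ = specNorm B ^ 2 * ∑ j, (x j)^2 := by rw [mul_pow, Real.sq_sqrt hnn2]

lemma max_sq_le (x : ℝ) : (max 0 x)^2 ≤ x^2 := by
  rcases le_total x 0 with h | h
  · rw [max_eq_left h]; simpa using sq_nonneg x
  · rw [max_eq_right h]

lemma ptwise (a t : ℝ) :
    (1/2)*(max 0 (a+t))^2 - (1/2)*(max 0 a)^2 - t * max 0 a ≤ (1/2)*t^2 := by
  rcases le_or_gt a 0 with h | h
  · rw [max_eq_left h]
    have h1 : max 0 (a+t) ≤ max 0 t := max_le_max le_rfl (by linarith)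
    have h2 : (0:ℝ) ≤ max 0 (a+t) := le_max_left 0 (a+t)
    nlinarith [max_sq_le t, le_max_left (0:ℝ) t]
  · rw [max_eq_right h.le]
    nlinarith [max_sq_le (a+t)]

lemma quadform_diag {m n : ℕ} (A : Matrix (Fin m) (Fin n) ℝ) (s : Fin n → ℝ) (q : Fin m → ℝ) :
    q ⬝ᵥ ((A * Matrix.diagonal s * Aᵀ) *ᵥ q) = ∑ j, s j * ((Aᵀ *ᵥ q) j)^2 := by
  rw [← Matrix.mulVec_mulVec, ← Matrix.mulVec_mulVec, Matrix.dotProduct_mulVec,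
    ← Matrix.mulVec_transpose]
  simp only [dotProduct, Matrix.mulVec_diagonal]
  apply Finset.sum_congr rfl
  intro j _
  ring

lemma quadform_smul_diag {m : ℕ} (δ : ℝ) (w : Fin m → ℝ) (q : Fin m → ℝ) :
    q ⬝ᵥ ((δ • Matrix.diagonal w) *ᵥ q) = δ * ∑ i, w i * (q i)^2 := by
  rw [Matrix.smul_mulVec, dotProduct_smul]
  simp only [smul_eq_mul, dotProduct, Matrix.mulVec_diagonal, Finset.mul_sum]
  apply Finset.sum_congr rfl
  intro i _
  ring

lemma transpose_mulVec_factor {m n : ℕ} (A : Matrix (Fin m) (Fin n) ℝ)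
    (hrows : ∀ i, (fun j => A i j) ≠ 0) (q : Fin m → ℝ) :
    Aᵀ *ᵥ q = ((Matrix.diagonal (fun i => Real.sqrt (∑ j, (A i j)^2)))⁻¹ * A)ᵀ *ᵥ
      ((Matrix.diagonal (fun i => Real.sqrt (∑ j, (A i j)^2))) *ᵥ q) := by
  set d : Fin m → ℝ := fun i => Real.sqrt (∑ j, (A i j)^2) with hd
  have hdpos : ∀ i, 0 < d i := by
    intro i
    apply Real.sqrt_pos.2
    have h0 : ∀ j ∈ Finset.univ, (0:ℝ) ≤ (A i j)^2 := fun j _ => sq_nonneg _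
    rcases Function.ne_iff.1 (hrows i) with ⟨j, hj⟩
    exact Finset.sum_pos' h0 ⟨j, Finset.mem_univ j,
      lt_of_le_of_ne (sq_nonneg _) (Ne.symm (pow_ne_zero 2 hj))⟩
  have hDA : Matrix.diagonal d * ((Matrix.diagonal d)⁻¹ * A) = A := by
    have hinv : (Matrix.diagonal d)⁻¹ = Matrix.diagonal (fun i => (d i)⁻¹) := by
      apply Matrix.inv_eq_right_inv
      rw [Matrix.diagonal_mul_diagonal]
      have : (fun i => d i * (d i)⁻¹) = fun _ => (1:ℝ) := by
        funext i; exact mul_inv_cancel₀ (hdpos i).ne'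
      rw [this, Matrix.diagonal_one]
    rw [hinv, ← Matrix.mul_assoc, Matrix.diagonal_mul_diagonal]
    have : (fun i => d i * (d i)⁻¹) = fun _ => (1:ℝ) := by
      funext i; exact mul_inv_cancel₀ (hdpos i).ne'
    rw [this, Matrix.diagonal_one, Matrix.one_mul]
  conv_lhs => rw [← hDA]
  rw [Matrix.transpose_mul, Matrix.diagonal_transpose, Matrix.mulVec_mulVec]

/-- The quadratic upper bound `φ(p+q) − φ(p) − qᵀg(p) ≤ (γ/2) qᵀM(p)q` with
`M(p) = H(p) + δ Diag(AAᵀ)` and `γ = ‖Â‖²/δ`. -/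
theorem phi_quadratic_upper_bound {m n : ℕ} (A : Matrix (Fin m) (Fin n) ℝ)
    (b : Fin m → ℝ) (xhat : Fin n → ℝ)
    (hrows : ∀ i, (fun j => A i j) ≠ 0)
    (δ : ℝ) (hδ : 0 < δ)
    (φ : (Fin m → ℝ) → ℝ)
    (hφ : ∀ p, φ p = (1/2) * ∑ j, (max 0 ((xhat + Aᵀ *ᵥ p) j))^2 - b ⬝ᵥ p)
    (g : (Fin m → ℝ) → (Fin m → ℝ))
    (hg : ∀ p, g p = A *ᵥ (fun j => max 0 ((xhat + Aᵀ *ᵥ p) j)) - b)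
    (M : (Fin m → ℝ) → Matrix (Fin m) (Fin m) ℝ)
    (hM : ∀ p, M p = A * Matrix.diagonal (fun j => posSign ((xhat + Aᵀ *ᵥ p) j)) * Aᵀ
        + δ • Matrix.diagonal (fun i => ∑ j, (A i j)^2))
    (γ : ℝ)
    (hγ : γ = specNorm ((Matrix.diagonal (fun i => Real.sqrt (∑ j, (A i j)^2)))⁻¹ * A) ^ 2 / δ)
    (p q : Fin m → ℝ) :
    φ (p + q) - φ p - q ⬝ᵥ g p ≤ (γ/2) * (q ⬝ᵥ (M p) *ᵥ q) := by
  set u : Fin n → ℝ := fun j => (xhat + Aᵀ *ᵥ p) j with hu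
  set v : Fin n → ℝ := Aᵀ *ᵥ q with hv
  -- rewrite the left side as a sum
  have hupq : ∀ j, (xhat + Aᵀ *ᵥ (p + q)) j = u j + v j := by
    intro j; simp [hu, hv, Matrix.mulVec_add, add_assoc]
  have hdot : q ⬝ᵥ (A *ᵥ (fun j => max 0 (u j))) = ∑ j, v j * max 0 (u j) := by
    rw [Matrix.dotProduct_mulVec, hv, Matrix.mulVec_transpose]
    rfl
  have hLHS : φ (p + q) - φ p - q ⬝ᵥ g p
      = ∑ j, ((1/2)*(max 0 (u j + v j))^2 - (1/2)*(max 0 (u j))^2 - v j * max 0 (u j)) := by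
    rw [hφ, hφ, hg]
    simp only [dotProduct_sub, dotProduct_add]
    rw [hdot]
    have h1 : ∑ j, (max 0 ((xhat + Aᵀ *ᵥ (p+q)) j))^2 = ∑ j, (max 0 (u j + v j))^2 := by
      apply Finset.sum_congr rfl; intro j _; rw [hupq j]
    rw [h1]
    have h2 : b ⬝ᵥ q = q ⬝ᵥ b := dotProduct_comm b q
    rw [Finset.sum_sub_distrib, Finset.sum_sub_distrib, ← Finset.mul_sum, ← Finset.mul_sum]
    ring_nf
    rw [h2]
    ring
  -- pointwise bound
  have hstep1 : φ (p + q) - φ p - q ⬝ᵥ g p ≤ (1/2) * ∑ j, (v j)^2 := by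
    rw [hLHS, Finset.mul_sum]
    apply Finset.sum_le_sum
    intro j _
    have := ptwise (u j) (v j)
    linarith
  -- the quadratic form
  set s : Fin n → ℝ := fun j => posSign (u j) with hs
  set Q : ℝ := ∑ i, (∑ j, (A i j)^2) * (q i)^2 with hQdef
  have hform : q ⬝ᵥ (M p) *ᵥ q = (∑ j, s j * (v j)^2) + δ * Q := by
    rw [hM, Matrix.add_mulVec, dotProduct_add]
    congr 1
    · exact quadform_diag A (fun j => posSign ((xhat + Aᵀ *ᵥ p) j)) q
    · exact quadform_smul_diag δ (fun i => ∑ j, (A i j)^2) q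
  -- bound ∑ v² by the diagonal part
  set Ahat := (Matrix.diagonal (fun i => Real.sqrt (∑ j, (A i j)^2)))⁻¹ * A with hAhat
  have hvQ : ∑ j, (v j)^2 ≤ specNorm Ahat ^ 2 * Q := by
    have hfac := transpose_mulVec_factor A hrows q
    rw [hv, hfac]
    have hb := sq_sum_mulVec_le Ahatᵀ
      ((Matrix.diagonal (fun i => Real.sqrt (∑ j, (A i j)^2))) *ᵥ q)
    rw [specNorm_transpose] at hb
    refine le_trans hb (le_of_eq ?_)
    congr 1
    rw [hQdef]
    apply Finset.sum_congr rfl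
    intro i _
    rw [Matrix.mulVec_diagonal, mul_pow, Real.sq_sqrt (Finset.sum_nonneg fun _ _ => sq_nonneg _)]
  have hsnn : 0 ≤ ∑ j, s j * (v j)^2 := by
    apply Finset.sum_nonneg
    intro j _
    have hps : 0 ≤ posSign (u j) := by unfold posSign; split <;> norm_num
    exact mul_nonneg hps (sq_nonneg _)
  have hγδ : γ * δ = specNorm Ahat ^ 2 := by
    rw [hγ, hAhat, div_mul_cancel₀ _ hδ.ne']
  have hγnn : 0 ≤ γ := by
    rw [hγ]; positivity
  calc φ (p + q) - φ p - q ⬝ᵥ g p ≤ (1/2) * ∑ j, (v j)^2 := hstep1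
    _ ≤ (1/2) * (specNorm Ahat ^ 2 * Q) := by linarith [hvQ]
    _ = (γ/2) * (δ * Q) := by rw [← hγδ]; ring
    _ ≤ (γ/2) * ((∑ j, s j * (v j)^2) + δ * Q) := by
        have : 0 ≤ (γ/2) * (∑ j, s j * (v j)^2) := by positivity
        nlinarith
    _ = (γ/2) * (q ⬝ᵥ (M p) *ᵥ q) := by rw [hform]
end

section
/- Let φ : ℝᵐ → ℝ, p ∈ ℝᵐ, let M be a symmetric positive definite m×m matrix, γ ≥ 1, and g, d ∈ ℝᵐ with g ≠ 0. Assume: (i) φ(p + q) − φ(p) − qᵀg ≤ (γ/2) qᵀMq for all q ∈ ℝᵐ; (ii) dᵀg = dᵀMd = ϑ² gᵀM⁻¹g for some ϑ with 0 < ϑ ≤ 1; (iii) α = 2^{−l} for some natural number l, the Armijo criterion φ(p − αd) ≤ φ(p) − (α/2) dᵀg holds at α, and either l = 0 or the Armijo criterion fails at steplength 2α = 2^{−(l−1)}. Then φ(p − αd) ≤ φ(p) − (ϑ²/(4γ)) gᵀM⁻¹g. -/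
/-!
Along the ray `t ↦ p - t • d` the quadratic model (i) and `dᵀg = dᵀMd =: D` give
`φ(p - t d) ≤ φ(p) - t D + (γ/2) t² D`. If Armijo fails at `2α`, comparing this bound at `t = 2α`
with the failure yields `D < 2γαD`; if `l = 0` then `α = 1` and `D ≤ 2γD` because `γ ≥ 1` and
`D = dᵀMd ≥ 0`. Either way `D / (4γ) ≤ (α/2) D`, so the Armijo decrease at `α` is at least
`D / (4γ) = (ϑ² / (4γ)) gᵀM⁻¹g`.
-/

open Matrix

section QuadraticModel

variable {n : Type*} [Fintype n] {φ : (n → ℝ) → ℝ} {p g d : n → ℝ}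
  {M : Matrix n n ℝ} {γ : ℝ}

theorem apply_sub_smul_le_of_quadratic_bound
    (hquad : ∀ q : n → ℝ, φ (p + q) - φ p - q ⬝ᵥ g ≤ (γ / 2) * (q ⬝ᵥ M *ᵥ q)) (t : ℝ) :
    φ (p - t • d) ≤ φ p - t * (d ⬝ᵥ g) + γ / 2 * t ^ 2 * (d ⬝ᵥ M *ᵥ d) := by
  have h := hquad (-t • d)
  rw [neg_smul, ← sub_eq_add_neg, neg_dotProduct, smul_dotProduct, neg_dotProduct,
    mulVec_neg, dotProduct_neg, mulVec_smul, dotProduct_smul, smul_dotProduct] at h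
  simp only [smul_eq_mul] at h
  linarith

theorem lt_two_mul_mul_of_armijo_fails
    (hquad : ∀ q : n → ℝ, φ (p + q) - φ p - q ⬝ᵥ g ≤ (γ / 2) * (q ⬝ᵥ M *ᵥ q))
    (hd : d ⬝ᵥ g = d ⬝ᵥ M *ᵥ d) {α : ℝ} (hα : 0 < α)
    (hfail : φ p - α * (d ⬝ᵥ g) < φ (p - (2 * α) • d)) :
    d ⬝ᵥ g < 2 * γ * α * (d ⬝ᵥ g) := by
  have hbound := apply_sub_smul_le_of_quadratic_bound (d := d) hquad (2 * α)
  rw [← hd] at hbound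
  have h : α * (d ⬝ᵥ g) < α * (2 * γ * α * (d ⬝ᵥ g)) := by nlinarith
  exact lt_of_mul_lt_mul_left h hα.le

end QuadraticModel

theorem newton_step_decrease_general {m : ℕ} (φ : (Fin m → ℝ) → ℝ)
    (p g d : Fin m → ℝ)
    (M : Matrix (Fin m) (Fin m) ℝ) (hMpd : M.PosDef)
    (γ : ℝ) (hγ : 1 ≤ γ) (ϑ : ℝ)
    (hquad : ∀ q : Fin m → ℝ, φ (p + q) - φ p - q ⬝ᵥ g ≤ (γ/2) * (q ⬝ᵥ M *ᵥ q))
    (hd1 : d ⬝ᵥ g = d ⬝ᵥ M *ᵥ d)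
    (hd2 : d ⬝ᵥ M *ᵥ d = ϑ^2 * (g ⬝ᵥ M⁻¹ *ᵥ g))
    (l : ℕ) (α : ℝ) (hα : α = (1/2 : ℝ)^l)
    (harmijo : φ (p - α • d) ≤ φ p - (α/2) * (d ⬝ᵥ g))
    (hprev : l = 0 ∨ φ (p - (2 * α) • d) > φ p - α * (d ⬝ᵥ g)) :
    φ (p - α • d) ≤ φ p - (ϑ^2 / (4 * γ)) * (g ⬝ᵥ M⁻¹ *ᵥ g) := by
  have hD : 0 ≤ d ⬝ᵥ g := hd1 ▸ hMpd.posSemidef.dotProduct_mulVec_nonneg d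
  have hstep : d ⬝ᵥ g ≤ 2 * γ * α * (d ⬝ᵥ g) := by
    rcases hprev with rfl | hfail
    · rw [pow_zero] at hα
      subst hα
      nlinarith
    · exact (lt_two_mul_mul_of_armijo_fails hquad hd1 (by rw [hα]; positivity) hfail).le
  have hdecrease : d ⬝ᵥ g / (4 * γ) ≤ α / 2 * (d ⬝ᵥ g) := by
    rw [div_le_iff₀ (by positivity)]
    linarith
  calc φ (p - α • d) ≤ φ p - α / 2 * (d ⬝ᵥ g) := harmijo
    _ ≤ φ p - d ⬝ᵥ g / (4 * γ) := by linarith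
    _ = φ p - (ϑ^2 / (4 * γ)) * (g ⬝ᵥ M⁻¹ *ᵥ g) := by rw [hd1, hd2, div_mul_eq_mul_div]

/-- Per-iteration decrease of the objective in the inexact Newton method with
backtracking Armijo line search: `φ(p − αd) ≤ φ(p) − (ϑ²/(4γ)) gᵀM⁻¹g`. -/
theorem newton_step_decrease {m : ℕ} (φ : (Fin m → ℝ) → ℝ)
    (p g d : Fin m → ℝ) (hgne : g ≠ 0)
    (M : Matrix (Fin m) (Fin m) ℝ) (hMs : M.IsSymm) (hMpd : M.PosDef)
    (γ : ℝ) (hγ : 1 ≤ γ) (ϑ : ℝ) (hϑ0 : 0 < ϑ) (hϑ1 : ϑ ≤ 1)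
    (hquad : ∀ q : Fin m → ℝ, φ (p + q) - φ p - q ⬝ᵥ g ≤ (γ/2) * (q ⬝ᵥ M *ᵥ q))
    (hd1 : d ⬝ᵥ g = d ⬝ᵥ M *ᵥ d)
    (hd2 : d ⬝ᵥ M *ᵥ d = ϑ^2 * (g ⬝ᵥ M⁻¹ *ᵥ g))
    (l : ℕ) (α : ℝ) (hα : α = (1/2 : ℝ)^l)
    (harmijo : φ (p - α • d) ≤ φ p - (α/2) * (d ⬝ᵥ g))
    (hprev : l = 0 ∨ φ (p - (2 * α) • d) > φ p - α * (d ⬝ᵥ g)) :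
    φ (p - α • d) ≤ φ p - (ϑ^2 / (4 * γ)) * (g ⬝ᵥ M⁻¹ *ᵥ g) :=
  newton_step_decrease_general φ p g d M hMpd γ hγ ϑ hquad hd1 hd2 l α hα harmijo hprev
end

section
/- Let φ : ℝᵐ → ℝ be bounded below by φ* ∈ ℝ, let (p_k) be a sequence in ℝᵐ with gradient directions g_k ∈ ℝᵐ, let (M_k) be symmetric positive definite m×m matrices, and let γ ≥ 1, δ ≥ 0, ϑ_min > 0, Λ > 0. Assume for every k: φ(p_{k+1}) ≤ φ(p_k) − (ϑ_min²/(4γ)) g_kᵀM_k⁻¹g_k, and qᵀM_k q ≤ Λ ‖q‖² for all q ∈ ℝᵐ. Then for every k ≥ 1, Σ_{j=0}^{k−1} ‖g_j‖² ≤ 4γΛ(φ(p_0) − φ*)/ϑ_min². -/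
/-!
Cauchy–Schwarz for the inner product defined by `M_k⁻¹`, applied to `g_k` and `M_k g_k`, gives
`‖g_k‖⁴ ≤ (g_kᵀM_k⁻¹g_k)(g_kᵀM_kg_k) ≤ Λ ‖g_k‖² (g_kᵀM_k⁻¹g_k)`, i.e. `‖g_k‖² ≤ Λ g_kᵀM_k⁻¹g_k`.
Summing the descent inequalities telescopes to `φ(p₀) − φ(p_k) ≤ φ(p₀) − φ*`.
-/

open Matrix

namespace Matrix

variable {n : Type*} [Fintype n]

theorem PosSemidef.sq_dotProduct_mulVec_le {M : Matrix n n ℝ} (hM : M.PosSemidef)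
    (x y : n → ℝ) :
    (x ⬝ᵥ M *ᵥ y) ^ 2 ≤ (x ⬝ᵥ M *ᵥ x) * (y ⬝ᵥ M *ᵥ y) := by
  have hsymm : y ⬝ᵥ M *ᵥ x = x ⬝ᵥ M *ᵥ y := by
    rw [dotProduct_mulVec, ← mulVec_transpose, dotProduct_comm,
      ← conjTranspose_eq_transpose_of_trivial, hM.isHermitian.eq]
  have hquad (t : ℝ) :
      0 ≤ (y ⬝ᵥ M *ᵥ y) * (t * t) + 2 * (x ⬝ᵥ M *ᵥ y) * t + x ⬝ᵥ M *ᵥ x := by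
    have hnonneg := hM.dotProduct_mulVec_nonneg (x + t • y)
    simp only [star_trivial, mulVec_add, mulVec_smul, add_dotProduct, dotProduct_add,
      smul_dotProduct, dotProduct_smul, smul_eq_mul, hsymm] at hnonneg
    linarith
  have hdiscrim := discrim_le_zero hquad
  rw [discrim] at hdiscrim
  linarith

theorem PosDef.dotProduct_self_le_of_dotProduct_mulVec_le [DecidableEq n] {M : Matrix n n ℝ}
    (hM : M.PosDef) {Λ : ℝ} {g : n → ℝ} (hg : g ⬝ᵥ M *ᵥ g ≤ Λ * (g ⬝ᵥ g)) :
    g ⬝ᵥ g ≤ Λ * (g ⬝ᵥ M⁻¹ *ᵥ g) := by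
  have hMg : M⁻¹ *ᵥ (M *ᵥ g) = g := by
    rw [mulVec_mulVec, nonsing_inv_mul M ((isUnit_iff_isUnit_det M).mp hM.isUnit), one_mulVec]
  have hMgMg : (M *ᵥ g) ⬝ᵥ M⁻¹ *ᵥ (M *ᵥ g) = g ⬝ᵥ M *ᵥ g := by
    rw [hMg, dotProduct_comm]
  have hcs := hM.inv.posSemidef.sq_dotProduct_mulVec_le g (M *ᵥ g)
  rw [hMgMg, hMg] at hcs
  have hinv : 0 ≤ g ⬝ᵥ M⁻¹ *ᵥ g := by
    simpa using hM.inv.posSemidef.dotProduct_mulVec_nonneg g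
  rcases eq_or_ne g 0 with rfl | hne
  · simp
  · have hpos : 0 < g ⬝ᵥ g := by simpa using dotProduct_self_star_pos_iff.mpr hne
    nlinarith [mul_le_mul_of_nonneg_left hg hinv]

end Matrix

theorem sum_range_le_sub_of_le_sub (f d : ℕ → ℝ) (fstar : ℝ) (hlow : ∀ k, fstar ≤ f k)
    (hdesc : ∀ k, f (k + 1) ≤ f k - d k) (n : ℕ) :
    ∑ j ∈ Finset.range n, d j ≤ f 0 - fstar := by
  calc ∑ j ∈ Finset.range n, d j ≤ ∑ j ∈ Finset.range n, (f j - f (j + 1)) :=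
        Finset.sum_le_sum fun j _ => by linarith [hdesc j]
    _ = f 0 - f n := Finset.sum_range_sub' f n
    _ ≤ f 0 - fstar := by linarith [hlow n]

theorem gradient_sum_bound_general {m : ℕ} (φ : (Fin m → ℝ) → ℝ) (φstar : ℝ)
    (hlow : ∀ x, φstar ≤ φ x)
    (p g : ℕ → Fin m → ℝ) (M : ℕ → Matrix (Fin m) (Fin m) ℝ)
    (hMpd : ∀ k, (M k).PosDef)
    (γ ϑmin Λ : ℝ) (hγ : 1 ≤ γ) (hϑ : 0 < ϑmin) (hΛ : 0 < Λ)
    (hdesc : ∀ k, φ (p (k+1)) ≤ φ (p k) - (ϑmin^2 / (4 * γ)) * (g k ⬝ᵥ (M k)⁻¹ *ᵥ g k))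
    (hbound : ∀ k, ∀ q : Fin m → ℝ, q ⬝ᵥ (M k) *ᵥ q ≤ Λ * ∑ i, (q i)^2) :
    ∀ k : ℕ, 1 ≤ k →
      ∑ j ∈ Finset.range k, ∑ i, (g j i)^2
        ≤ 4 * γ * Λ * (φ (p 0) - φstar) / ϑmin^2 := by
  intro k _
  set c := ϑmin ^ 2 / (4 * γ)
  have hc : 0 < c := div_pos (by positivity) (by linarith)
  have hgrad (j : ℕ) : ∑ i, (g j i) ^ 2 ≤ Λ * (g j ⬝ᵥ (M j)⁻¹ *ᵥ g j) := by
    have hsq : ∑ i, (g j i) ^ 2 = g j ⬝ᵥ g j := by simp only [dotProduct, sq]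
    rw [hsq]
    exact (hMpd j).dotProduct_self_le_of_dotProduct_mulVec_le (hsq ▸ hbound j (g j))
  have hdecrease := sum_range_le_sub_of_le_sub (φ ∘ p) (fun j => c * (g j ⬝ᵥ (M j)⁻¹ *ᵥ g j))
    φstar (fun _ => hlow _) hdesc k
  calc ∑ j ∈ Finset.range k, ∑ i, (g j i) ^ 2
      ≤ Λ / c * ∑ j ∈ Finset.range k, c * (g j ⬝ᵥ (M j)⁻¹ *ᵥ g j) := by
        rw [Finset.mul_sum]
        refine Finset.sum_le_sum fun j _ => (hgrad j).trans_eq ?_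
        field_simp
    _ ≤ Λ / c * (φ (p 0) - φstar) := by gcongr; exact hdecrease
    _ = 4 * γ * Λ * (φ (p 0) - φstar) / ϑmin ^ 2 := by
        simp only [c]
        field_simp

/-- Summability of the squared gradient norms of the inexact Newton iterates:
`Σ_{j<k} ‖g_j‖² ≤ 4γΛ(φ(p₀) − φ*)/ϑ_min²`. -/
theorem gradient_sum_bound {m : ℕ} (φ : (Fin m → ℝ) → ℝ) (φstar : ℝ)
    (hlow : ∀ x, φstar ≤ φ x)
    (p g : ℕ → Fin m → ℝ) (M : ℕ → Matrix (Fin m) (Fin m) ℝ)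
    (hMs : ∀ k, (M k).IsSymm) (hMpd : ∀ k, (M k).PosDef)
    (γ δ ϑmin Λ : ℝ) (hγ : 1 ≤ γ) (hδ : 0 ≤ δ) (hϑ : 0 < ϑmin) (hΛ : 0 < Λ)
    (hdesc : ∀ k, φ (p (k+1)) ≤ φ (p k) - (ϑmin^2 / (4 * γ)) * (g k ⬝ᵥ (M k)⁻¹ *ᵥ g k))
    (hbound : ∀ k, ∀ q : Fin m → ℝ, q ⬝ᵥ (M k) *ᵥ q ≤ Λ * ∑ i, (q i)^2) :
    ∀ k : ℕ, 1 ≤ k →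
      ∑ j ∈ Finset.range k, ∑ i, (g j i)^2
        ≤ 4 * γ * Λ * (φ (p 0) - φstar) / ϑmin^2 :=
  gradient_sum_bound_general φ φstar hlow p g M hMpd γ ϑmin Λ hγ hϑ hΛ hdesc hbound
end

section
/- Let φ : ℝᵐ → ℝ be bounded below by φ* ∈ ℝ, let (p_k) be a sequence in ℝᵐ with g_k ∈ ℝᵐ, let (M_k) be symmetric positive definite m×m matrices, and let γ ≥ 1, ϑ_min > 0, Λ > 0. Assume for every k: φ(p_{k+1}) ≤ φ(p_k) − (ϑ_min²/(4γ)) g_kᵀM_k⁻¹g_k, and qᵀM_k q ≤ Λ‖q‖² for all q ∈ ℝᵐ. Then lim_{k→∞} ‖g_k‖ = 0. -/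
open Matrix Filter

/-!
Telescoping the sufficient-decrease inequality against the lower bound `φstar` shows that
`∑ₖ gₖᵀ Mₖ⁻¹ gₖ` converges. Cauchy–Schwarz for the form of `Mₖ`, applied to `g` and `Mₖ⁻¹ g`,
gives `‖g‖⁴ ≤ (gᵀ Mₖ g) (gᵀ Mₖ⁻¹ g) ≤ Λ ‖g‖² gᵀ Mₖ⁻¹ g`, hence `‖gₖ‖² ≤ Λ gₖᵀ Mₖ⁻¹ gₖ → 0`.
-/

namespace Matrix

variable {n K : Type*} [Fintype n] [Field K] [LinearOrder K] [IsStrictOrderedRing K]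
  [StarRing K] [TrivialStar K]

theorem PosSemidef.dotProduct_mulVec_sq_le {M : Matrix n n K} (hM : M.PosSemidef) (x y : n → K) :
    (x ⬝ᵥ M *ᵥ y) ^ 2 ≤ (x ⬝ᵥ M *ᵥ x) * (y ⬝ᵥ M *ᵥ y) := by
  have hsymm : y ⬝ᵥ M *ᵥ x = x ⬝ᵥ M *ᵥ y := by
    rw [dotProduct_mulVec, dotProduct_comm, ← vecMul_transpose,
      ← conjTranspose_eq_transpose_of_trivial, hM.isHermitian.eq]
  have hnonneg : ∀ z, 0 ≤ z ⬝ᵥ M *ᵥ z := by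
    simpa using hM.dotProduct_mulVec_nonneg
  simpa [hsymm, sq] using LinearMap.BilinForm.apply_mul_apply_le_of_forall_zero_le
    ((dotProductBilin K K).compl₂ M.mulVecLin) hnonneg x y

theorem PosDef.sum_sq_le_mul_dotProduct_inv_mulVec [DecidableEq n] {M : Matrix n n K}
    (hM : M.PosDef) {Λ : K} (hΛ : ∀ q, q ⬝ᵥ M *ᵥ q ≤ Λ * ∑ i, q i ^ 2) (x : n → K) :
    ∑ i, x i ^ 2 ≤ Λ * (x ⬝ᵥ M⁻¹ *ᵥ x) := by
  rcases eq_or_ne x 0 with rfl | hx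
  · simp
  have hxx : x ⬝ᵥ x = ∑ i, x i ^ 2 := by simp [dotProduct, sq]
  have hpos : 0 < x ⬝ᵥ x := lt_of_le_of_ne (hxx ▸ Finset.sum_nonneg fun i _ => sq_nonneg _)
    (Ne.symm (dotProduct_self_eq_zero.not.mpr hx))
  have hMinv : M *ᵥ (M⁻¹ *ᵥ x) = x := by
    rw [mulVec_mulVec, mul_nonsing_inv _ ((isUnit_iff_isUnit_det M).mp hM.isUnit), one_mulVec]
  have hcs := hM.posSemidef.dotProduct_mulVec_sq_le x (M⁻¹ *ᵥ x)
  rw [hMinv, dotProduct_comm (M⁻¹ *ᵥ x)] at hcs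
  have hinv : 0 ≤ x ⬝ᵥ M⁻¹ *ᵥ x := by simpa using hM.inv.posSemidef.dotProduct_mulVec_nonneg x
  have hbound : x ⬝ᵥ M *ᵥ x ≤ Λ * (x ⬝ᵥ x) := hxx ▸ hΛ x
  rw [← hxx]
  refine le_of_mul_le_mul_left ?_ hpos
  calc (x ⬝ᵥ x) * (x ⬝ᵥ x) = (x ⬝ᵥ x) ^ 2 := (sq _).symm
    _ ≤ (x ⬝ᵥ M *ᵥ x) * (x ⬝ᵥ M⁻¹ *ᵥ x) := hcs
    _ ≤ Λ * (x ⬝ᵥ x) * (x ⬝ᵥ M⁻¹ *ᵥ x) := mul_le_mul_of_nonneg_right hbound hinv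
    _ = (x ⬝ᵥ x) * (Λ * (x ⬝ᵥ M⁻¹ *ᵥ x)) := by ring

end Matrix

theorem summable_of_bddBelow_of_le_sub {f a : ℕ → ℝ} {b : ℝ} (ha : ∀ k, 0 ≤ a k)
    (hf : ∀ k, b ≤ f k) (h : ∀ k, f (k + 1) ≤ f k - a k) : Summable a :=
  summable_of_sum_range_le ha fun n =>
    calc ∑ k ∈ Finset.range n, a k ≤ ∑ k ∈ Finset.range n, (f k - f (k + 1)) :=
          Finset.sum_le_sum fun k _ => by linarith [h k]
      _ = f 0 - f n := Finset.sum_range_sub' f n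
      _ ≤ f 0 - b := by linarith [hf n]

theorem gradient_tendsto_zero_general {m : ℕ} (φ : (Fin m → ℝ) → ℝ) (φstar : ℝ)
    (hlow : ∀ x, φstar ≤ φ x)
    (p g : ℕ → Fin m → ℝ) (M : ℕ → Matrix (Fin m) (Fin m) ℝ)
    (hMpd : ∀ k, (M k).PosDef)
    (γ ϑmin Λ : ℝ) (hγ : 1 ≤ γ) (hϑ : 0 < ϑmin)
    (hdesc : ∀ k, φ (p (k+1)) ≤ φ (p k) - (ϑmin^2 / (4 * γ)) * (g k ⬝ᵥ (M k)⁻¹ *ᵥ g k))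
    (hbound : ∀ k, ∀ q : Fin m → ℝ, q ⬝ᵥ (M k) *ᵥ q ≤ Λ * ∑ i, (q i)^2) :
    Tendsto (fun k => Real.sqrt (∑ i, (g k i)^2)) atTop (nhds 0) := by
  have hc : 0 < ϑmin ^ 2 / (4 * γ) := div_pos (pow_pos hϑ 2) (by linarith)
  have ha : ∀ k, 0 ≤ g k ⬝ᵥ (M k)⁻¹ *ᵥ g k := fun k => by
    simpa using (hMpd k).inv.posSemidef.dotProduct_mulVec_nonneg (g k)
  have hsummable : Summable fun k => g k ⬝ᵥ (M k)⁻¹ *ᵥ g k :=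
    (summable_mul_left_iff hc.ne').mp <|
      summable_of_bddBelow_of_le_sub (fun k => mul_nonneg hc.le (ha k)) (fun k => hlow (p k)) hdesc
  have hsq : Tendsto (fun k => ∑ i, g k i ^ 2) atTop (nhds 0) :=
    squeeze_zero (fun k => Finset.sum_nonneg fun i _ => sq_nonneg (g k i))
      (fun k => (hMpd k).sum_sq_le_mul_dotProduct_inv_mulVec (hbound k) (g k))
      (by simpa using hsummable.tendsto_atTop_zero.const_mul Λ)
  simpa using hsq.sqrt

/-- Convergence of gradient norms to zero for the inexact Newton iterates. -/
theorem gradient_tendsto_zero {m : ℕ} (φ : (Fin m → ℝ) → ℝ) (φstar : ℝ)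
    (hlow : ∀ x, φstar ≤ φ x)
    (p g : ℕ → Fin m → ℝ) (M : ℕ → Matrix (Fin m) (Fin m) ℝ)
    (hMs : ∀ k, (M k).IsSymm) (hMpd : ∀ k, (M k).PosDef)
    (γ ϑmin Λ : ℝ) (hγ : 1 ≤ γ) (hϑ : 0 < ϑmin) (hΛ : 0 < Λ)
    (hdesc : ∀ k, φ (p (k+1)) ≤ φ (p k) - (ϑmin^2 / (4 * γ)) * (g k ⬝ᵥ (M k)⁻¹ *ᵥ g k))
    (hbound : ∀ k, ∀ q : Fin m → ℝ, q ⬝ᵥ (M k) *ᵥ q ≤ Λ * ∑ i, (q i)^2) :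
    Tendsto (fun k => Real.sqrt (∑ i, (g k i)^2)) atTop (nhds 0) :=
  gradient_tendsto_zero_general φ φstar hlow p g M hMpd γ ϑmin Λ hγ hϑ hdesc hbound
end

section
/- Let A be a real m×n matrix, b ∈ ℝᵐ, x̂ ∈ ℝⁿ. If there exists y ∈ ℝⁿ with y ≥ 0 componentwise and Ay = b, then for every p ∈ ℝᵐ, φ(p) ≥ ½‖x̂‖² − ½‖y − x̂‖²; in particular φ is bounded from below. -/
open Matrix

/-- If the system `Ay = b, y ≥ 0` is feasible, then
`φ(p) = ½‖(x̂ + Aᵀp)₊‖² − bᵀp` is bounded from below by `½‖x̂‖² − ½‖y − x̂‖²`. -/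
theorem phi_bounded_below {m n : ℕ} (A : Matrix (Fin m) (Fin n) ℝ)
    (b : Fin m → ℝ) (xhat : Fin n → ℝ)
    (φ : (Fin m → ℝ) → ℝ)
    (hφ : ∀ p, φ p = (1/2) * ∑ j, (max 0 ((xhat + Aᵀ *ᵥ p) j))^2 - b ⬝ᵥ p)
    (y : Fin n → ℝ) (hy0 : ∀ j, 0 ≤ y j) (hyb : A *ᵥ y = b) :
    (∀ p, (1/2) * ∑ j, (xhat j)^2 - (1/2) * ∑ j, (y j - xhat j)^2 ≤ φ p)
      ∧ BddBelow (Set.range φ) := by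
  have key : ∀ p, (1/2) * ∑ j, (xhat j)^2 - (1/2) * ∑ j, (y j - xhat j)^2 ≤ φ p := by
    intro p
    rw [hφ p]
    have hb : b ⬝ᵥ p = ∑ j, y j * (Aᵀ *ᵥ p) j := by
      rw [← hyb]
      simp only [mulVec, dotProduct, transpose_apply, Finset.sum_mul, Finset.mul_sum]
      rw [Finset.sum_comm]
      apply Finset.sum_congr rfl
      intro j _
      apply Finset.sum_congr rfl
      intro i _
      ring
    rw [hb]
    rw [Finset.mul_sum, Finset.mul_sum, Finset.mul_sum, ← Finset.sum_sub_distrib,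
      ← Finset.sum_sub_distrib]
    apply Finset.sum_le_sum
    intro j _
    have hm1 : (0:ℝ) ≤ max 0 ((xhat + Aᵀ *ᵥ p) j) := le_max_left _ _
    have hm2 : (xhat + Aᵀ *ᵥ p) j ≤ max 0 ((xhat + Aᵀ *ᵥ p) j) := le_max_right _ _
    have hv : (xhat + Aᵀ *ᵥ p) j = xhat j + (Aᵀ *ᵥ p) j := rfl
    have hy := hy0 j
    nlinarith [sq_nonneg (max 0 ((xhat + Aᵀ *ᵥ p) j) - y j),
      mul_le_mul_of_nonneg_left hm2 hy]
  exact ⟨key, ⟨_, fun x ⟨p, hp⟩ => hp ▸ key p⟩⟩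
end

section
/- Let A be a real m×n matrix, b ∈ ℝᵐ, x̂ ∈ ℝⁿ, and suppose p ∈ ℝᵐ satisfies A(x̂ + Aᵀp)₊ = b. Set x = (x̂ + Aᵀp)₊. Then x ≥ 0 componentwise, Ax = b, and for every y ∈ ℝⁿ with y ≥ 0 componentwise and Ay = b, ‖x − x̂‖ ≤ ‖y − x̂‖; that is, x is the Euclidean projection of x̂ onto the set of nonnegative solutions of Ax = b. -/
open Matrix

/-- If the dual gradient vanishes at `p`, i.e. `A(x̂ + Aᵀp)₊ = b`, then
`x = (x̂ + Aᵀp)₊` is the Euclidean projection of `x̂` onto the set of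
nonnegative solutions of `Ax = b`. -/
theorem projection_characterization {m n : ℕ} (A : Matrix (Fin m) (Fin n) ℝ)
    (b : Fin m → ℝ) (xhat : Fin n → ℝ) (p : Fin m → ℝ)
    (hp : A *ᵥ (fun j => max 0 ((xhat + Aᵀ *ᵥ p) j)) = b)
    (x : Fin n → ℝ) (hx : x = fun j => max 0 ((xhat + Aᵀ *ᵥ p) j)) :
    (∀ j, 0 ≤ x j) ∧ A *ᵥ x = b ∧
      ∀ y : Fin n → ℝ, (∀ j, 0 ≤ y j) → A *ᵥ y = b →
        Real.sqrt (∑ j, (x j - xhat j)^2) ≤ Real.sqrt (∑ j, (y j - xhat j)^2) := by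
  have hxj : ∀ j, x j = max 0 (xhat j + (Aᵀ *ᵥ p) j) := by
    intro j; rw [hx]; rfl
  have hAx : A *ᵥ x = b := by rw [hx]; exact hp
  refine ⟨fun j => by rw [hxj]; exact le_max_left _ _, hAx, fun y hy hAy => ?_⟩
  apply Real.sqrt_le_sqrt
  -- second sum: (y - x) ⬝ᵥ Aᵀp = 0
  have h2 : ∑ j, (y j - x j) * (Aᵀ *ᵥ p) j = 0 := by
    have : ∑ j, (y j - x j) * (Aᵀ *ᵥ p) j = (y - x) ⬝ᵥ (Aᵀ *ᵥ p) := by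
      simp [dotProduct, Pi.sub_apply]
    rw [this, Matrix.dotProduct_mulVec, Matrix.vecMul_transpose, Matrix.mulVec_sub,
      hAy, hAx, sub_self]
    simp
  have h1 : 0 ≤ ∑ j, (y j - x j) * (x j - (xhat j + (Aᵀ *ᵥ p) j)) := by
    apply Finset.sum_nonneg
    intro j _
    rcases le_or_gt 0 (xhat j + (Aᵀ *ᵥ p) j) with h | h
    · rw [hxj j, max_eq_right h]; simp
    · rw [hxj j, max_eq_left h.le]
      have := hy j
      nlinarith
  have key : 0 ≤ ∑ j, (y j - x j) * (x j - xhat j) := by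
    have : ∑ j, (y j - x j) * (x j - xhat j)
        = ∑ j, (y j - x j) * (x j - (xhat j + (Aᵀ *ᵥ p) j))
          + ∑ j, (y j - x j) * (Aᵀ *ᵥ p) j := by
      rw [← Finset.sum_add_distrib]
      exact Finset.sum_congr rfl fun j _ => by ring
    rw [this, h2, add_zero]
    exact h1
  have expand : ∑ j, (y j - xhat j)^2
      = ∑ j, (y j - x j)^2 + 2 * ∑ j, (y j - x j) * (x j - xhat j)
        + ∑ j, (x j - xhat j)^2 := by
    rw [Finset.mul_sum, ← Finset.sum_add_distrib, ← Finset.sum_add_distrib]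
    exact Finset.sum_congr rfl fun j _ => by ring
  have hsq : 0 ≤ ∑ j, (y j - x j)^2 :=
    Finset.sum_nonneg fun j _ => sq_nonneg _
  linarith
end
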